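/- arXiv:1702.05216 — 4 statements merged into one kernel-verified Lean document; each statement's English description precedes it below -/
import Mathlib

section
/- Let X^r be a finite-dimensional subspace of H¹_0(Ω)^n and let the differential filter of v ∈ X^r be v̄ ∈ X^r defined by δ²(∇v̄, ∇v_r) + (v̄, v_r) = (v, v_r) for all v_r ∈ X^r. Then ‖∇v̄‖ ≤ ‖∇v‖, i.e., filtering does not increase the H¹-seminorm of elements of X^r. -/
open scoped RealInnerProductSpace

/-- The ROM differential filter does not increase the `H¹` seminorm of elements
of the ROM space: for `v ∈ X^r` with filtered variable `v̄ ∈ X^r`,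
`‖∇v̄‖ ≤ ‖∇v‖`. -/
theorem rom_differential_filter_H1_stability_on_Xr
    {V W : Type*} [NormedAddCommGroup V] [InnerProductSpace ℝ V]
    [NormedAddCommGroup W] [InnerProductSpace ℝ W]
    (G : V →ₗ[ℝ] W) (K : Submodule ℝ V) (hK : FiniteDimensional ℝ K)
    (δ : ℝ) (hδ : 0 < δ) (v vb : V) (hv : v ∈ K) (hvb : vb ∈ K)
    (hfilter : ∀ vr ∈ K, δ ^ 2 * ⟪G vb, G vr⟫ + ⟪vb, vr⟫ = ⟪v, vr⟫) :
    ‖G vb‖ ≤ ‖G v‖ := by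
  have h := hfilter (v - vb) (K.sub_mem hv hvb)
  rw [map_sub] at h
  have hδ2 : 0 < δ ^ 2 := pow_pos hδ 2
  -- δ² (⟪Gvb, Gv⟫ - ‖Gvb‖²) = ‖v - vb‖² ≥ 0
  have key : ‖G vb‖ ^ 2 ≤ ⟪G vb, G v⟫ := by
    have hpos : 0 ≤ δ ^ 2 * (⟪G vb, G v⟫ - ‖G vb‖ ^ 2) := by
      have : δ ^ 2 * (⟪G vb, G v⟫ - ‖G vb‖ ^ 2) = ⟪v - vb, v - vb⟫ := by
        simp only [inner_sub_right, inner_sub_left, real_inner_self_eq_norm_sq] at h ⊢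
        nlinarith [real_inner_comm v vb, real_inner_comm vb v]
      rw [this]
      exact real_inner_self_nonneg
    nlinarith
  have cs : ⟪G vb, G v⟫ ≤ ‖G vb‖ * ‖G v‖ := real_inner_le_norm _ _
  rcases eq_or_lt_of_le (norm_nonneg (G vb)) with h0 | h0
  · rw [← h0]; exact norm_nonneg _
  · have : ‖G vb‖ * ‖G vb‖ ≤ ‖G vb‖ * ‖G v‖ := by nlinarith
    exact le_of_mul_le_mul_left this h0
end

section
/- Let v ∈ H¹_0(Ω)^n with Δv ∈ L²(Ω)^n, and let v̄ ∈ X^r be its differential filter with radius δ > 0. Decompose the error as e = v − v̄ = η − Φ_r with η = v − w_r and Φ_r = v̄ − w_r for arbitrary w_r ∈ X^r. Then (δ²/2)‖∇Φ_r‖² + (1/2)‖Φ_r‖² ≤ (δ²/2)‖∇η‖² + ‖η‖² + δ⁴‖Δv‖². -/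
open scoped RealInnerProductSpace

/-- Energy bound for the ROM filtering error equation: with `η = v − w_r` and
`Φ_r = v̄ − w_r` for arbitrary `w_r ∈ X^r`, the differential filter satisfies
`(δ²/2)‖∇Φ_r‖² + (1/2)‖Φ_r‖² ≤ (δ²/2)‖∇η‖² + ‖η‖² + δ⁴‖Δv‖²`.
The hypothesis `hL` encodes `Δv = L ∈ L²` via integration by parts. -/
theorem rom_filtering_error_energy_bound
    {V W : Type*} [NormedAddCommGroup V] [InnerProductSpace ℝ V]
    [NormedAddCommGroup W] [InnerProductSpace ℝ W]
    (G : V →ₗ[ℝ] W) (K : Submodule ℝ V) (hK : FiniteDimensional ℝ K)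
    (δ : ℝ) (hδ : 0 < δ) (v L vb : V) (hvb : vb ∈ K)
    (hfilter : ∀ vr ∈ K, δ ^ 2 * ⟪G vb, G vr⟫ + ⟪vb, vr⟫ = ⟪v, vr⟫)
    (hL : ∀ vr ∈ K, ⟪G v, G vr⟫ = -⟪L, vr⟫)
    (wr : V) (hwr : wr ∈ K) :
    δ ^ 2 / 2 * ‖G (vb - wr)‖ ^ 2 + 1 / 2 * ‖vb - wr‖ ^ 2 ≤
      δ ^ 2 / 2 * ‖G (v - wr)‖ ^ 2 + ‖v - wr‖ ^ 2 + δ ^ 4 * ‖L‖ ^ 2 := by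
  set Φ := vb - wr with hΦdef
  have hΦ : Φ ∈ K := K.sub_mem hvb hwr
  have h1 := hfilter Φ hΦ
  have h2 := hL Φ hΦ
  -- energy identity
  have key : δ ^ 2 * ⟪G Φ, G Φ⟫ + ⟪Φ, Φ⟫ =
      δ ^ 2 * ⟪G (v - wr), G Φ⟫ + ⟪v - wr, Φ⟫ + δ ^ 2 * ⟪L, Φ⟫ := by
    simp only [hΦdef, map_sub, inner_sub_left] at *
    linear_combination h1 - δ ^ 2 * h2
  have cs1 : ⟪G (v - wr), G Φ⟫ ≤ ‖G (v - wr)‖ * ‖G Φ‖ := real_inner_le_norm _ _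
  have cs2 : ⟪v - wr, Φ⟫ ≤ ‖v - wr‖ * ‖Φ‖ := real_inner_le_norm _ _
  have cs3 : ⟪L, Φ⟫ ≤ ‖L‖ * ‖Φ‖ := real_inner_le_norm _ _
  have n1 : ⟪G Φ, G Φ⟫ = ‖G Φ‖ ^ 2 := real_inner_self_eq_norm_sq _
  have n2 : ⟪Φ, Φ⟫ = ‖Φ‖ ^ 2 := real_inner_self_eq_norm_sq _
  have hδ2 : (0:ℝ) < δ ^ 2 := by positivity
  nlinarith [mul_nonneg hδ2.le (sq_nonneg (‖G (v - wr)‖ - ‖G Φ‖)),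
    sq_nonneg (2 * ‖v - wr‖ - ‖Φ‖), sq_nonneg (2 * (δ ^ 2 * ‖L‖) - ‖Φ‖),
    mul_le_mul_of_nonneg_left cs1 hδ2.le, mul_le_mul_of_nonneg_left cs3 hδ2.le]
end

section
/- Let v ∈ H¹_0(Ω)^n with Δv ∈ L²(Ω)^n and let v̄ ∈ X^r be its differential filter with radius δ > 0. Then there exists an absolute constant C such that δ²‖∇(v − v̄)‖² + ‖v − v̄‖² ≤ C inf_{w_r ∈ X^r} ( δ²‖∇(v − w_r)‖² + ‖v − w_r‖² ) + C δ⁴ ‖Δv‖². -/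
open scoped RealInnerProductSpace

/-- Quasi-optimality of the ROM differential filter: there is an absolute constant
`C` such that for every filter radius `δ > 0`, every ROM space `K`, and every `v`
with `Δv = L ∈ L²`,
`δ²‖∇(v − v̄)‖² + ‖v − v̄‖² ≤ C inf_{w_r ∈ K} (δ²‖∇(v − w_r)‖² + ‖v − w_r‖²) + C δ⁴‖Δv‖²`. -/
theorem rom_filtering_error_quasi_optimality
    {V W : Type*} [NormedAddCommGroup V] [InnerProductSpace ℝ V]
    [NormedAddCommGroup W] [InnerProductSpace ℝ W] (G : V →ₗ[ℝ] W) :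
    ∃ C : ℝ, 0 < C ∧
      ∀ (δ : ℝ), 0 < δ → ∀ (K : Submodule ℝ V), FiniteDimensional ℝ K →
      ∀ (v L vb : V), vb ∈ K →
      (∀ vr ∈ K, δ ^ 2 * ⟪G vb, G vr⟫ + ⟪vb, vr⟫ = ⟪v, vr⟫) →
      (∀ vr ∈ K, ⟪G v, G vr⟫ = -⟪L, vr⟫) →
      δ ^ 2 * ‖G (v - vb)‖ ^ 2 + ‖v - vb‖ ^ 2 ≤
        C * (⨅ wr : K, (δ ^ 2 * ‖G (v - (wr : V))‖ ^ 2 + ‖v - (wr : V)‖ ^ 2)) +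
          C * δ ^ 4 * ‖L‖ ^ 2 := by
  refine ⟨8, by norm_num, ?_⟩
  intro δ hδ K _ v L vb hvb hfilter hlap
  haveI : Nonempty K := ⟨0⟩
  set e := v - vb with he
  clear_value e
  have herr : ∀ vr ∈ K, δ ^ 2 * ⟪G e, G vr⟫ + ⟪e, vr⟫ = -(δ ^ 2 * ⟪L, vr⟫) := by
    intro vr hvr
    have h1 := hfilter vr hvr
    have h2 := hlap vr hvr
    have hg : G e = G v - G vb := by rw [he, map_sub]
    rw [hg, he, inner_sub_left, inner_sub_left, h2]
    ring_nf
    nlinarith [h1]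
  have key : ∀ wr : K, δ ^ 2 * ‖G e‖ ^ 2 + ‖e‖ ^ 2 ≤
      8 * (δ ^ 2 * ‖G (v - (wr : V))‖ ^ 2 + ‖v - (wr : V)‖ ^ 2) + 8 * δ ^ 4 * ‖L‖ ^ 2 := by
    intro wr
    set η := v - (wr : V) with hη
    clear_value η
    have hφK : e - η ∈ K := by
      have hx : e - η = (wr : V) - vb := by rw [he, hη]; abel
      rw [hx]; exact K.sub_mem wr.2 hvb
    have hsplit : δ ^ 2 * ‖G e‖ ^ 2 + ‖e‖ ^ 2
        = δ ^ 2 * ⟪G e, G η⟫ + ⟪e, η⟫ - δ ^ 2 * ⟪L, e - η⟫ := by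
      have h := herr (e - η) hφK
      have hge : G (e - η) = G e - G η := map_sub G e η
      rw [hge, inner_sub_right, inner_sub_right] at h
      have hn1 : ⟪G e, G e⟫ = ‖G e‖ ^ 2 := real_inner_self_eq_norm_sq _
      have hn2 : ⟪e, e⟫ = ‖e‖ ^ 2 := real_inner_self_eq_norm_sq _
      nlinarith [h]
    have c1 : ⟪G e, G η⟫ ≤ ‖G e‖ * ‖G η‖ := real_inner_le_norm _ _
    have c2 : ⟪e, η⟫ ≤ ‖e‖ * ‖η‖ := real_inner_le_norm _ _
    have c3 : -⟪L, e - η⟫ ≤ ‖L‖ * ‖e‖ + ‖L‖ * ‖η‖ := by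
      rw [inner_sub_right]
      have h1 : -⟪L, e⟫ ≤ ‖L‖ * ‖e‖ := by
        have := (abs_le.mp (abs_real_inner_le_norm L e)).1; linarith
      have h2 : ⟪L, η⟫ ≤ ‖L‖ * ‖η‖ := real_inner_le_norm _ _
      linarith
    have hδ2 : (0 : ℝ) < δ ^ 2 := by positivity
    nlinarith [mul_le_mul_of_nonneg_left c1 hδ2.le,
      mul_le_mul_of_nonneg_left c3 hδ2.le, c2, hsplit,
      mul_nonneg hδ2.le (sq_nonneg (‖G e‖ - ‖G η‖)),
      sq_nonneg (‖e‖ - ‖η‖), sq_nonneg (2 * δ ^ 2 * ‖L‖ - ‖e‖),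
      sq_nonneg (δ ^ 2 * ‖L‖ - ‖η‖)]
  have hI : (δ ^ 2 * ‖G e‖ ^ 2 + ‖e‖ ^ 2 - 8 * δ ^ 4 * ‖L‖ ^ 2) / 8 ≤
      ⨅ wr : K, (δ ^ 2 * ‖G (v - (wr : V))‖ ^ 2 + ‖v - (wr : V)‖ ^ 2) :=
    le_ciInf fun wr => by have := key wr; linarith
  linarith
end

section
/- Let v ∈ H¹_0(Ω)^n with Δv ∈ L²(Ω)^n and let v̄ ∈ X^r be its differential filter. Suppose X^r satisfies the inverse estimate ‖∇v_r‖ ≤ √(‖S_r‖₂) ‖v_r‖ for v_r ∈ X^r, and that the L²-projection error bounds ‖v − P_r v‖² ≤ A and ‖∇(v − P_r v)‖² ≤ B hold. Then δ²‖∇(v − v̄)‖² + ‖v − v̄‖² ≤ C( A + δ² B + δ⁴ ‖Δv‖² ) for a constant C independent of δ, A, B, v. -/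
open scoped RealInnerProductSpace

set_option maxHeartbeats 1600000 in
/-- ROM filtering error estimate: there is a constant `C` (independent of `δ`, the
projection error bounds `A`, `B`, and `v`) such that, whenever `v̄ ∈ X^r` is the
differential filter of `v` (with `Δv = L ∈ L²` encoded by integration by parts),
`X^r` satisfies the inverse estimate with constant `√s`, `P_r v` is the `L²`
projection of `v` onto `X^r`, and `‖v − P_r v‖² ≤ A`, `‖∇(v − P_r v)‖² ≤ B`, then
`δ²‖∇(v − v̄)‖² + ‖v − v̄‖² ≤ C (A + δ² B + δ⁴ ‖Δv‖²)`. -/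
theorem rom_filtering_error_estimate
    {V W : Type*} [NormedAddCommGroup V] [InnerProductSpace ℝ V]
    [NormedAddCommGroup W] [InnerProductSpace ℝ W]
    (G : V →ₗ[ℝ] W) (K : Submodule ℝ V) (hK : FiniteDimensional ℝ K) :
    ∃ C : ℝ, 0 < C ∧
      ∀ (δ A B s : ℝ) (v L pv vb : V), 0 < δ → 0 ≤ s →
      vb ∈ K → pv ∈ K →
      (∀ vr ∈ K, ‖G vr‖ ≤ Real.sqrt s * ‖vr‖) →
      (∀ vr ∈ K, δ ^ 2 * ⟪G vb, G vr⟫ + ⟪vb, vr⟫ = ⟪v, vr⟫) →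
      (∀ vr ∈ K, ⟪G v, G vr⟫ = -⟪L, vr⟫) →
      (∀ vr ∈ K, ⟪pv, vr⟫ = ⟪v, vr⟫) →
      ‖v - pv‖ ^ 2 ≤ A → ‖G (v - pv)‖ ^ 2 ≤ B →
      δ ^ 2 * ‖G (v - vb)‖ ^ 2 + ‖v - vb‖ ^ 2 ≤
        C * (A + δ ^ 2 * B + δ ^ 4 * ‖L‖ ^ 2) := by
  refine ⟨4, by norm_num, ?_⟩
  intro δ A B s v L pv vb hδ hs hvbK hpvK hinv hfilt hibp hproj hA hB
  set η := v - pv with hη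
  set φ := pv - vb with hφdef
  have hφK : φ ∈ K := K.sub_mem hpvK hvbK
  have h1 := hfilt φ hφK
  have h2 := hibp φ hφK
  have h3 := hproj φ hφK
  have hsum : η + φ = v - vb := by rw [hη, hφdef]; abel
  -- orthogonality of η and φ
  have horth : ⟪η, φ⟫ = 0 := by
    rw [hη, inner_sub_left, h3]; ring
  -- key identity
  have hGsplit : ⟪G v - G vb, G φ⟫ = ⟪G v, G φ⟫ - ⟪G vb, G φ⟫ :=
    inner_sub_left _ _ _
  have hvsplit : ⟪v - vb, φ⟫ = ⟪v, φ⟫ - ⟪vb, φ⟫ := inner_sub_left _ _ _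
  have hkeyid : δ ^ 2 * ⟪G v - G vb, G φ⟫ + ⟪v - vb, φ⟫ = -(δ ^ 2 * ⟪L, φ⟫) := by
    rw [hGsplit, hvsplit, h2]; nlinarith [h1]
  -- rewrite left side using η, φ
  have hGin : ⟪G v - G vb, G φ⟫ = ⟪G η, G φ⟫ + ‖G φ‖ ^ 2 := by
    have : G v - G vb = G η + G φ := by
      rw [← map_sub, ← hsum, map_add]
    rw [this, inner_add_left, real_inner_self_eq_norm_sq]
  have hvin : ⟪v - vb, φ⟫ = ‖φ‖ ^ 2 := by
    rw [← hsum, inner_add_left, horth, real_inner_self_eq_norm_sq]; ring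
  have hkey : δ ^ 2 * ‖G φ‖ ^ 2 + ‖φ‖ ^ 2
      = -(δ ^ 2 * ⟪G η, G φ⟫) - δ ^ 2 * ⟪L, φ⟫ := by
    rw [hGin, hvin] at hkeyid; linarith
  have hc1 : -(‖G η‖ * ‖G φ‖) ≤ ⟪G η, G φ⟫ := by
    have := abs_real_inner_le_norm (G η) (G φ)
    cases abs_le.mp this with
    | intro h _ => linarith
  have hc2 : -(‖L‖ * ‖φ‖) ≤ ⟪L, φ⟫ := by
    have := abs_real_inner_le_norm L φ
    cases abs_le.mp this with
    | intro h _ => linarith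
  have hδ2 : (0:ℝ) < δ ^ 2 := by positivity
  -- Young's inequality steps
  have hbound : δ ^ 2 * ‖G φ‖ ^ 2 + ‖φ‖ ^ 2 ≤ δ ^ 2 * ‖G η‖ ^ 2 + δ ^ 4 * ‖L‖ ^ 2 := by
    nlinarith [sq_nonneg (‖G η‖ - ‖G φ‖), sq_nonneg (δ ^ 2 * ‖L‖ - ‖φ‖),
      mul_le_mul_of_nonneg_left hc1 hδ2.le, mul_le_mul_of_nonneg_left hc2 hδ2.le]
  -- triangle inequalities
  have ht1 : ‖v - vb‖ ≤ ‖η‖ + ‖φ‖ := by rw [← hsum]; exact norm_add_le _ _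
  have ht2 : ‖G (v - vb)‖ ≤ ‖G η‖ + ‖G φ‖ := by
    have : G (v - vb) = G η + G φ := by rw [← hsum, map_add]
    rw [this]; exact norm_add_le _ _
  have hn1 : (0:ℝ) ≤ ‖v - vb‖ := norm_nonneg _
  have hn2 : (0:ℝ) ≤ ‖G (v - vb)‖ := norm_nonneg _
  have hsq1 : ‖v - vb‖ ^ 2 ≤ 2 * ‖η‖ ^ 2 + 2 * ‖φ‖ ^ 2 := by
    have h := pow_le_pow_left₀ hn1 ht1 2
    nlinarith [h, sq_nonneg (‖η‖ - ‖φ‖)]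
  have hsq2 : ‖G (v - vb)‖ ^ 2 ≤ 2 * ‖G η‖ ^ 2 + 2 * ‖G φ‖ ^ 2 := by
    have h := pow_le_pow_left₀ hn2 ht2 2
    nlinarith [h, sq_nonneg (‖G η‖ - ‖G φ‖)]
  have e1 := mul_le_mul_of_nonneg_left hsq2 hδ2.le
  have e2 := mul_le_mul_of_nonneg_left hB hδ2.le
  have hA0 : (0:ℝ) ≤ A := le_trans (sq_nonneg _) hA
  have hL4 : (0:ℝ) ≤ δ ^ 4 * ‖L‖ ^ 2 := by positivity
  linarith [e1, e2, hsq1, hbound, hA, hA0, hL4]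
end
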